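/- Let G be a discrete group, N ⊴ G, and A a G-graded *-algebra. Mansfield's bimodule Y = Y_{G/N}^G(A) is the vector space spanned by symbols (a_r, s) for r, s ∈ G and a_r ∈ A_r, with operations on generators: (a_r, s, n)·(b_t, u) = (a_r b_t, u n⁻¹) if s n = t u else 0 (left action of A⋊G⋊N); ⟨(a_r,s),(b_t,u)⟩_left = (a_r b_t*, t s, s⁻¹ u) if sN = uN else 0; (a_r, s)·(b_t, uN) = (a_r b_t, t⁻¹ s) if sN = t u N else 0 (right action of A⋊(G/N)); ⟨(a_r,s),(b_t,u)⟩_right = (a_r* b_t, uN) if r s = t u else 0. Then the compatibility identity ⟨x, y⟩_left · z = x · ⟨y, z⟩_right holds for all generators x = (a_r, s), y = (b_t, u), z = (c_v, w) of Y. -/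
import Mathlib


/-!
Statement 10: let `G` be a discrete group, `N ⊴ G`, and `A` a `G`-graded
*-algebra.  Mansfield's bimodule `Y = Y_{G/N}^G(A)` is spanned by generators
`(a_r, s)` (modelled as `Finsupp.single (r, s) a` in `(G × G) →₀ A`), with
  left action of `A ⋊ G ⋊ N`:  `(a_r, s, n)·(b_t, u) = (a_r b_t, u n⁻¹)` if
    `s n = t u`, else `0`;
  left inner product:  `⟨(a_r,s),(b_t,u)⟩_L = (a_r b_t*, t s, s⁻¹ u)` if
    `sN = uN`, else `0`;
  right action of `A ⋊ (G/N)`:  `(a_r, s)·(b_t, uN) = (a_r b_t, t⁻¹ s)` if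
    `sN = t uN`, else `0`;
  right inner product:  `⟨(a_r,s),(b_t,u)⟩_R = (a_r* b_t, uN)` if `r s = t u`,
    else `0`.
Then the imprimitivity compatibility `⟨x, y⟩_L · z = x · ⟨y, z⟩_R` holds on all
generators `x = (a_r, s)`, `y = (b_t, u)`, `z = (c_v, w)`.
-/

attribute [local instance] Classical.propDecidable

noncomputable section

variable {G : Type*} [Group G] {A : Type*} [Ring A] [Algebra ℂ A] [StarRing A]
  [StarModule ℂ A] {N : Subgroup G} [N.Normal]

/-- `A` is a `G`-graded *-algebra with grading subspaces `𝒜 s`. -/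
structure IsStarGrading (𝒜 : G → Submodule ℂ A) : Prop where
  one_mem : (1 : A) ∈ 𝒜 1
  mul_mem : ∀ ⦃s t : G⦄ ⦃a b : A⦄, a ∈ 𝒜 s → b ∈ 𝒜 t → a * b ∈ 𝒜 (s * t)
  star_mem : ∀ ⦃s : G⦄ ⦃a : A⦄, a ∈ 𝒜 s → star a ∈ 𝒜 s⁻¹
  indep : iSupIndep 𝒜
  span_top : ⨆ s, 𝒜 s = ⊤

/-- The `A ⋊ G ⋊ N`-valued left inner product of the generators `(a_r, s)` and
`(b_t, u)` of Mansfield's bimodule: `(a_r b_t*, t s, s⁻¹ u)` if `sN = uN`,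
else `0`. -/
def mLeftInner (a : A) (r s : G) (b : A) (t u : G) : (G × G × N) →₀ A :=
  if h : (s : G ⧸ N) = (u : G ⧸ N) then
    Finsupp.single (r * t⁻¹, t * s, ⟨s⁻¹ * u, QuotientGroup.eq.mp h⟩) (a * star b)
  else 0

/-- The left action of an element of `A ⋊ G ⋊ N` on the generator `(c_v, w)` of
Mansfield's bimodule: on algebra generators,
`(a_r, s, n)·(c_v, w) = (a_r c_v, w n⁻¹)` if `s n = v w`, else `0`. -/
def lActY (ℓ : (G × G × N) →₀ A) (c : A) (v w : G) : (G × G) →₀ A :=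
  ℓ.sum fun p x =>
    if p.2.1 * (p.2.2 : G) = v * w then
      Finsupp.single (p.1 * v, w * ((p.2.2 : G))⁻¹) (x * c)
    else 0

/-- The `A ⋊ (G/N)`-valued right inner product of the generators `(b_t, u)` and
`(c_v, w)` of Mansfield's bimodule: `(b_t* c_v, wN)` if `t u = v w`, else `0`. -/
def mRightInner (b : A) (t u : G) (c : A) (v w : G) : (G × G ⧸ N) →₀ A :=
  if t * u = v * w then Finsupp.single (t⁻¹ * v, (w : G ⧸ N)) (star b * c) else 0

/-- The right action of an element of `A ⋊ (G/N)` on the generator `(a_r, s)` of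
Mansfield's bimodule: on algebra generators,
`(a_r, s)·(b_t, uN) = (a_r b_t, t⁻¹ s)` if `sN = t·uN`, else `0`. -/
def rActY (a : A) (r s : G) (ρ : (G × G ⧸ N) →₀ A) : (G × G) →₀ A :=
  ρ.sum fun q x =>
    if (s : G ⧸ N) = (q.1 : G ⧸ N) * q.2 then
      Finsupp.single (r * q.1, q.1⁻¹ * s) (a * x)
    else 0

/-- The imprimitivity compatibility identity `⟨x, y⟩_L · z = x · ⟨y, z⟩_R` for
Mansfield's bimodule `Y_{G/N}^G(A)`, on generators. -/
theorem mansfield_bimodule_imprimitivity_compatibility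
    (𝒜 : G → Submodule ℂ A) (h𝒜 : IsStarGrading 𝒜) :
    ∀ (a b c : A) (r s t u v w : G),
      a ∈ 𝒜 r → b ∈ 𝒜 t → c ∈ 𝒜 v →
      lActY (mLeftInner (N := N) a r s b t u) c v w =
        rActY a r s (mRightInner (N := N) b t u c v w) := by
  intro a b c r s t u v w _ _ _
  unfold mLeftInner mRightInner lActY rActY
  by_cases h1 : (s : G ⧸ N) = (u : G ⧸ N)
  · by_cases h2 : t * u = v * w
    · rw [dif_pos h1, if_pos h2,
        Finsupp.sum_single_index (by simp), Finsupp.sum_single_index (by simp)]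
      have hcond1 : t * s * (s⁻¹ * u) = v * w := by
        rw [mul_assoc, mul_inv_cancel_left]; exact h2
      have hu : t⁻¹ * v * w = u := by
        rw [mul_assoc, inv_mul_eq_iff_eq_mul]; exact h2.symm
      have hcond2 : (s : G ⧸ N) = ((t⁻¹ * v : G) : G ⧸ N) * (w : G ⧸ N) := by
        have e : ((t⁻¹ * v : G) : G ⧸ N) * (w : G ⧸ N) = ((t⁻¹ * v * w : G) : G ⧸ N) := rfl
        rw [e, hu]; exact h1
      rw [if_pos hcond1, if_pos hcond2]
      have e1 : r * t⁻¹ * v = r * (t⁻¹ * v) := by group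
      have e2 : w * (s⁻¹ * u)⁻¹ = (t⁻¹ * v)⁻¹ * s := by
        have hv : v = t * u * w⁻¹ := by rw [h2]; group
        rw [hv]; group
      rw [e1, e2, mul_assoc]
    · rw [dif_pos h1, if_neg h2, Finsupp.sum_single_index (by simp),
        Finsupp.sum_zero_index]
      have : ¬ t * s * (s⁻¹ * u) = v * w := by
        rw [mul_assoc, mul_inv_cancel_left]; exact h2
      rw [if_neg this]
  · rw [dif_neg h1, Finsupp.sum_zero_index]
    by_cases h2 : t * u = v * w
    · rw [if_pos h2, Finsupp.sum_single_index (by simp)]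
      have : ¬ (s : G ⧸ N) = ((t⁻¹ * v : G) : G ⧸ N) * (w : G ⧸ N) := by
        intro hc
        apply h1
        have e : ((t⁻¹ * v : G) : G ⧸ N) * (w : G ⧸ N) = ((t⁻¹ * v * w : G) : G ⧸ N) := rfl
        have hu : t⁻¹ * v * w = u := by
          rw [mul_assoc, inv_mul_eq_iff_eq_mul]; exact h2.symm
        rw [e, hu] at hc; exact hc
      rw [if_neg this]
    · rw [if_neg h2, Finsupp.sum_zero_index]

end
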